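/- arXiv:2303.07903 — 7 statements merged into one kernel-verified Lean document; each statement's English description precedes it below -/
import Mathlib

section
/- Let X₁, …, X_{n_s} : Ω → {1,…,n_c} be independent random variables on a probability space (Ω, ℙ) with ℙ[X_j = i] = p_i for every j and i, where p ∈ Δ^{n_c}. For i ∈ {1,…,n_c}, let I_i := #{ j ∈ {1,…,n_s} : X_j = i } and fix k ∈ ℕ^{n_c}. Define α := 1 − ( n_c − Σ_{i=1}^{n_c} Σ_{l=0}^{k_i} C(n_s, l)·p_i^l·(1−p_i)^{n_s−l} ), where C(n, l) is the binomial coefficient. Then α ≤ 1 and ℙ[ ∀ i ∈ {1,…,n_c}, I_i ≤ k_i ] ≥ Φ(α). -/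
/-!
For a fixed value `i`, the events `{X j = i}` are independent with probability `p i`, so the random
set `{j | X j = i}` has the product Bernoulli law `setBer(univ, p i)` and its cardinality `I_i` is
binomial: `ℙ[I_i ≤ k_i]` is exactly the inner sum in the definition of `α`. The union bound applied
to the complementary events gives `ℙ[∀ i, I_i ≤ k_i] ≥ 1 - ∑ i, (1 - ℙ[I_i ≤ k_i]) = α`.
-/

open MeasureTheory ProbabilityTheory unitInterval

namespace ProbabilityTheory

lemma one_sub_sum_one_sub_probReal_le_probReal_iInter {Ω ι : Type*} [MeasurableSpace Ω]
    {μ : Measure Ω} [IsProbabilityMeasure μ] [Fintype ι] {E : ι → Set Ω}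
    (hE : ∀ i, MeasurableSet (E i)) :
    1 - ∑ i, (1 - μ.real (E i)) ≤ μ.real (⋂ i, E i) := by
  have hunion := measureReal_iUnion_fintype_le (μ := μ) fun i ↦ (E i)ᶜ
  rw [← Set.compl_iInter, probReal_compl_eq_one_sub (MeasurableSet.iInter hE)] at hunion
  simp_rw [probReal_compl_eq_one_sub (hE _)] at hunion
  linarith

variable {Ω ι β : Type*} [MeasurableSpace Ω] [MeasurableSpace β] {μ : Measure Ω}
  {X : ι → Ω → β} {B : Set β}

lemma measurable_setOf_mem_preimage (hX : ∀ j, Measurable (X j)) (hB : MeasurableSet B) :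
    Measurable fun ω ↦ {j | X j ω ∈ B} :=
  measurable_set_iff.2 fun j ↦ measurableSet_setOfPred.1 (hX j hB)

variable [Fintype ι]

open scoped Classical in
lemma iIndepFun.measure_setOf_mem_preimage_eq (hind : iIndepFun X μ) (hB : MeasurableSet B)
    (s : Set ι) :
    μ {ω | {j | X j ω ∈ B} = s} =
      ∏ j, if j ∈ s then μ (X j ⁻¹' B) else μ (X j ⁻¹' Bᶜ) := by
  have hevent : {ω | {j | X j ω ∈ B} = s} = ⋂ j, X j ⁻¹' if j ∈ s then B else Bᶜ := by
    ext ω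
    simp only [Set.ext_iff, Set.mem_ofPred_eq, Set.mem_iInter, Set.mem_preimage]
    refine forall_congr' fun j ↦ ?_
    split_ifs with hj <;> simp [hj]
  rw [hevent, hind.meas_iInter fun j ↦ ⟨_, ?_, rfl⟩]
  · simp only [apply_ite]
  · split_ifs
    exacts [hB, hB.compl]

theorem iIndepFun.isSetBernoulli_setOf_mem_preimage [IsProbabilityMeasure μ]
    (hind : iIndepFun X μ) (hX : ∀ j, Measurable (X j)) (hB : MeasurableSet B) {p : I}
    (hp : ∀ j, μ (X j ⁻¹' B) = toNNReal p) :
    IsSetBernoulli (fun ω ↦ {j | X j ω ∈ B}) Set.univ p μ := by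
  classical
  have hmeas := measurable_setOf_mem_preimage hX hB
  have hcompl (j : ι) : μ (X j ⁻¹' Bᶜ) = toNNReal (σ p) := by
    rw [Set.preimage_compl, prob_compl_eq_one_sub (hX j hB), hp j, ← ENNReal.coe_one,
      ← toNNReal_add_toNNReal_symm p, ENNReal.coe_add,
      ENNReal.add_sub_cancel_left ENNReal.coe_ne_top]
  refine ⟨hmeas.aemeasurable, Measure.ext_of_singleton fun s ↦ ?_⟩
  rw [Measure.map_apply hmeas (measurableSet_singleton s),
    setBernoulli_singleton p (Set.subset_univ s) Set.finite_univ]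
  simp only [Set.preimage, Set.mem_singleton_iff]
  rw [hind.measure_setOf_mem_preimage_eq hB]
  simp only [hp, hcompl]
  rw [Finset.prod_ite, Finset.prod_const, Finset.prod_const]
  congr 2 <;> rw [Set.ncard_eq_toFinset_card'] <;> congr 1 <;> ext <;> simp

theorem iIndepFun.measureReal_ncard_setOf_mem_preimage_le [IsProbabilityMeasure μ]
    (hind : iIndepFun X μ) (hX : ∀ j, Measurable (X j)) (hB : MeasurableSet B) {p : I}
    (hp : ∀ j, μ (X j ⁻¹' B) = toNNReal p) (k : ℕ) :
    μ.real {ω | {j | X j ω ∈ B}.ncard ≤ k} = ∑ l ∈ Finset.range (k + 1),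
      ((Fintype.card ι).choose l : ℝ) * p ^ l * (1 - p) ^ (Fintype.card ι - l) := by
  have hlaw := hind.isSetBernoulli_setOf_mem_preimage hX hB hp
  calc μ.real {ω | {j | X j ω ∈ B}.ncard ≤ k}
      = setBer(Set.univ, p).real {s : Set ι | s.ncard ≤ k} :=
        hlaw.measureReal_eq (p := (·.ncard ≤ k)) (Set.to_countable _).measurableSet
    _ = (setBer(Set.univ, p).map Set.ncard).real ↑(Finset.range (k + 1)) := by
        rw [map_measureReal_apply (measurable_of_countable (Set.ncard : Set ι → ℕ))
          (Set.to_countable _).measurableSet]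
        congr 1
        ext s
        simp
    _ = _ := by
        rw [← sum_measureReal_singleton]
        refine Finset.sum_congr rfl fun l _ ↦ ?_
        rw [map_ncard_setBernoulli_real_singleton Set.finite_univ, Set.ncard_univ,
          Nat.card_eq_fintype_card]

end ProbabilityTheory

theorem constraint_event_probability_bound_general
    {Ω : Type*} [MeasurableSpace Ω] (μ : Measure Ω) [IsProbabilityMeasure μ]
    (ns nc : ℕ)
    (X : Fin ns → Ω → Fin nc)
    (hmeas : ∀ j, Measurable (X j))
    (hindep : iIndepFun X μ)
    (p : Fin nc → ℝ)
    (hp_nonneg : ∀ i, 0 ≤ p i) (hp_sum : ∑ i, p i = 1)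
    (hdist : ∀ j i, μ {ω | X j ω = i} = ENNReal.ofReal (p i))
    (k : Fin nc → ℕ)
    (α : ℝ)
    (hα : α = 1 - ((nc : ℝ) - ∑ i, ∑ l ∈ Finset.range (k i + 1),
      (ns.choose l : ℝ) * p i ^ l * (1 - p i) ^ (ns - l))) :
    α ≤ 1 ∧
    ENNReal.ofReal (max α 0) ≤
      μ {ω | ∀ i, (Finset.univ.filter fun j => X j ω = i).card ≤ k i} := by
  set E : Fin nc → Set Ω := fun i ↦ {ω | {j | X j ω ∈ ({i} : Set (Fin nc))}.ncard ≤ k i}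
  have hp_le_one (i : Fin nc) : p i ≤ 1 :=
    hp_sum ▸ Finset.single_le_sum (fun j _ ↦ hp_nonneg j) (Finset.mem_univ i)
  have hE (i : Fin nc) : μ.real (E i) = ∑ l ∈ Finset.range (k i + 1),
      (ns.choose l : ℝ) * p i ^ l * (1 - p i) ^ (ns - l) := by
    have hpi (j : Fin ns) : μ (X j ⁻¹' {i}) = toNNReal ⟨p i, hp_nonneg i, hp_le_one i⟩ := by
      rw [← ENNReal.ofReal_coe_nnreal]
      exact hdist j i
    simpa [E] using
      hindep.measureReal_ncard_setOf_mem_preimage_le hmeas (measurableSet_singleton i) hpi (k i)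
  have hE_meas (i : Fin nc) : MeasurableSet (E i) :=
    measurable_setOf_mem_preimage hmeas (measurableSet_singleton i)
      (Set.to_countable {s : Set (Fin ns) | s.ncard ≤ k i}).measurableSet
  have hαE : α ≤ μ.real (⋂ i, E i) := by
    have hunion := one_sub_sum_one_sub_probReal_le_probReal_iInter (μ := μ) hE_meas
    simp_rw [hE, Finset.sum_sub_distrib] at hunion
    simpa [hα] using hunion
  have hevent : {ω | ∀ i, (Finset.univ.filter fun j => X j ω = i).card ≤ k i} = ⋂ i, E i := by
    ext ω
    simp [E, Set.ncard_eq_toFinset_card']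
  rw [hevent]
  exact ⟨hαE.trans measureReal_le_one,
    ENNReal.ofReal_le_of_le_toReal (max_le hαE measureReal_nonneg)⟩

/-- Lemma 2: lower bound on the probability that all sampling constraints hold. -/
theorem constraint_event_probability_bound
    {Ω : Type*} [MeasurableSpace Ω] (μ : Measure Ω) [IsProbabilityMeasure μ]
    (ns nc : ℕ) (hns : 0 < ns) (hnc : 0 < nc)
    (X : Fin ns → Ω → Fin nc)
    (hmeas : ∀ j, Measurable (X j))
    (hindep : iIndepFun X μ)
    (p : Fin nc → ℝ)
    (hp_nonneg : ∀ i, 0 ≤ p i) (hp_sum : ∑ i, p i = 1)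
    (hdist : ∀ j i, μ {ω | X j ω = i} = ENNReal.ofReal (p i))
    (k : Fin nc → ℕ)
    (α : ℝ)
    (hα : α = 1 - ((nc : ℝ) - ∑ i, ∑ l ∈ Finset.range (k i + 1),
      (ns.choose l : ℝ) * p i ^ l * (1 - p i) ^ (ns - l))) :
    α ≤ 1 ∧
    ENNReal.ofReal (max α 0) ≤
      μ {ω | ∀ i, (Finset.univ.filter fun j => X j ω = i).card ≤ k i} :=
  constraint_event_probability_bound_general μ ns nc X hmeas hindep p hp_nonneg hp_sum hdist k α hα
end

section
/- Let X₁, …, X_{n_s} : Ω → {1,…,n_c} be independent random variables on a probability space (Ω, ℙ) with ℙ[X_j = i] = p_i for every j and i, where p ∈ Δ^{n_c}. For i ∈ {1,…,n_c}, let I_i := #{ j ∈ {1,…,n_s} : X_j = i }, fix k ∈ ℕ^{n_c}, let 𝒦 denote the event {∀ i ∈ {1,…,n_c}, I_i ≤ k_i}, and define α := 1 − ( n_c − Σ_{i=1}^{n_c} Σ_{l=0}^{k_i} C(n_s, l)·p_i^l·(1−p_i)^{n_s−l} ). Let 𝒜 ⊆ Ω be any measurable event with ℙ[𝒜] ≥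 1 − δ for some δ ∈ (0,1). Then α ≤ 1 and ℙ[ 𝒜 ∩ 𝒦 ] ≥ Φ(α − δ). -/
/-!
For each value `i`, independence gives every pattern `{j | X j = i} = S` the probability
`p i ^ #S * (1 - p i) ^ (ns - #S)`, so the count of `i` is binomial and the `i`-th inner sum in
`α` is the probability of `Kᵢ = {count of i ≤ k i}`. Hence `α = 1 - ∑ i, ℙ[Kᵢᶜ] ≤ ℙ[⋂ i, Kᵢ]` by
the union bound, and `ℙ[A ∩ K] ≥ ℙ[A] + ℙ[K] - 1 ≥ α - δ`.
-/

open MeasureTheory ProbabilityTheory Finset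

section Hits

variable {Ω ι β : Type*} [Fintype ι] [DecidableEq ι] [DecidableEq β]

def hits (Y : ι → Ω → β) (b : β) (ω : Ω) : Finset ι :=
  univ.filter fun j => Y j ω = b

theorem prod_ite_mem_univ_eq_pow_mul_pow {M : Type*} [CommMonoid M]
    (S : Finset ι) (x y : M) :
    ∏ j, (if j ∈ S then x else y) = x ^ #S * y ^ (Fintype.card ι - #S) := by
  rw [prod_ite, prod_const, prod_const, filter_mem_eq_inter, univ_inter,
    show univ.filter (· ∉ S) = Sᶜ by ext; simp, card_compl]

theorem hits_preimage_singleton (Y : ι → Ω → β) (b : β) (S : Finset ι) :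
    hits Y b ⁻¹' {S} = ⋂ j, Y j ⁻¹' (if j ∈ S then {b} else {b}ᶜ) := by
  ext ω
  simp only [Set.mem_preimage, Set.mem_singleton_iff, Set.mem_iInter, Finset.ext_iff, hits,
    mem_filter, mem_univ, true_and]
  refine forall_congr' fun j => ?_
  by_cases hj : j ∈ S <;> simp [hj]

variable [MeasurableSpace Ω] [MeasurableSpace β] [MeasurableSingletonClass β]
  {Y : ι → Ω → β} {b : β}

theorem measurableSet_hits_preimage (hY : ∀ j, Measurable (Y j)) (T : Set (Finset ι)) :
    MeasurableSet (hits Y b ⁻¹' T) := by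
  rw [← Set.biUnion_preimage_singleton]
  refine T.toFinite.measurableSet_biUnion fun S _ => ?_
  rw [hits_preimage_singleton]
  exact .iInter fun j => hY j (by split_ifs <;> simp)

variable {μ : Measure Ω} [IsProbabilityMeasure μ] {q : ℝ}

theorem measureReal_hits_preimage_singleton (hY : ∀ j, Measurable (Y j)) (hind : iIndepFun Y μ)
    (hq : ∀ j, μ.real (Y j ⁻¹' {b}) = q) (S : Finset ι) :
    μ.real (hits Y b ⁻¹' {S}) = q ^ #S * (1 - q) ^ (Fintype.card ι - #S) := by
  have hmem (j : ι) : MeasurableSet (if j ∈ S then {b} else {b}ᶜ : Set β) := by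
    split_ifs <;> simp
  have hfactor (j : ι) :
      μ.real (Y j ⁻¹' (if j ∈ S then {b} else {b}ᶜ)) = if j ∈ S then q else 1 - q := by
    split_ifs
    · exact hq j
    · rw [Set.preimage_compl, probReal_compl_eq_one_sub (hY j (measurableSet_singleton b)), hq j]
  rw [hits_preimage_singleton, measureReal_def, hind.meas_iInter fun j => ⟨_, hmem j, rfl⟩,
    ENNReal.toReal_prod]
  simp only [← measureReal_def, hfactor]
  exact prod_ite_mem_univ_eq_pow_mul_pow S q (1 - q)

theorem measureReal_card_hits_eq (hY : ∀ j, Measurable (Y j)) (hind : iIndepFun Y μ)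
    (hq : ∀ j, μ.real (Y j ⁻¹' {b}) = q) (m : ℕ) :
    μ.real {ω | #(hits Y b ω) = m} =
      (Fintype.card ι).choose m * q ^ m * (1 - q) ^ (Fintype.card ι - m) := by
  have hset : {ω | #(hits Y b ω) = m} = hits Y b ⁻¹' ↑(powersetCard m (univ : Finset ι)) := by
    ext ω
    simp
  rw [hset, ← sum_measureReal_preimage_singleton _ fun S _ => measurableSet_hits_preimage hY _,
    sum_congr rfl fun S hS => by
      rw [measureReal_hits_preimage_singleton hY hind hq, mem_powersetCard_univ.1 hS],
    sum_const, card_powersetCard, card_univ, nsmul_eq_mul, mul_assoc]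

theorem measureReal_card_hits_le (hY : ∀ j, Measurable (Y j)) (hind : iIndepFun Y μ)
    (hq : ∀ j, μ.real (Y j ⁻¹' {b}) = q) (k : ℕ) :
    μ.real {ω | #(hits Y b ω) ≤ k} = ∑ l ∈ range (k + 1),
      ((Fintype.card ι).choose l : ℝ) * q ^ l * (1 - q) ^ (Fintype.card ι - l) := by
  have hset : {ω | #(hits Y b ω) ≤ k} = (fun ω => #(hits Y b ω)) ⁻¹' ↑(range (k + 1)) := by
    ext ω
    simp
  rw [hset, ← sum_measureReal_preimage_singleton _ fun m _ =>
    measurableSet_hits_preimage hY {S | #S = m}]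
  exact sum_congr rfl fun m _ => measureReal_card_hits_eq hY hind hq m

end Hits

section

variable {Ω ι : Type*} [MeasurableSpace Ω] {μ : Measure Ω} [IsProbabilityMeasure μ]

theorem one_sub_sum_measureReal_compl_le_measureReal_iInter [Fintype ι] {E : ι → Set Ω}
    (hE : ∀ i, MeasurableSet (E i)) :
    1 - ∑ i, μ.real (E i)ᶜ ≤ μ.real (⋂ i, E i) := by
  have := measureReal_iUnion_fintype_le (μ := μ) fun i => (E i)ᶜ
  rw [← Set.compl_iInter, probReal_compl_eq_one_sub (.iInter hE)] at this
  linarith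

theorem measureReal_add_measureReal_sub_one_le_measureReal_inter {A K : Set Ω}
    (hK : MeasurableSet K) : μ.real A + μ.real K - 1 ≤ μ.real (A ∩ K) := by
  have := measureReal_union_add_inter (μ := μ) (s := A) hK
  linarith [measureReal_le_one (μ := μ) (s := A ∪ K)]

end

theorem intersection_with_constraint_bound_general
    {Ω : Type*} [MeasurableSpace Ω] (μ : Measure Ω) [IsProbabilityMeasure μ]
    (ns nc : ℕ)
    (X : Fin ns → Ω → Fin nc)
    (hmeas : ∀ j, Measurable (X j))
    (hindep : iIndepFun X μ)
    (p : Fin nc → ℝ)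
    (hp_nonneg : ∀ i, 0 ≤ p i)
    (hdist : ∀ j i, μ {ω | X j ω = i} = ENNReal.ofReal (p i))
    (k : Fin nc → ℕ)
    (α : ℝ)
    (hα : α = 1 - ((nc : ℝ) - ∑ i, ∑ l ∈ Finset.range (k i + 1),
      (ns.choose l : ℝ) * p i ^ l * (1 - p i) ^ (ns - l)))
    (A : Set Ω)
    (δ : ℝ)
    (hPA : ENNReal.ofReal (1 - δ) ≤ μ A) :
    α ≤ 1 ∧
    ENNReal.ofReal (max (α - δ) 0) ≤
      μ (A ∩ {ω | ∀ i, (Finset.univ.filter fun j => X j ω = i).card ≤ k i}) := by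
  let K : Fin nc → Set Ω := fun i => {ω | #(hits X i ω) ≤ k i}
  have hK_meas (i : Fin nc) : MeasurableSet (K i) :=
    measurableSet_hits_preimage hmeas {S | #S ≤ k i}
  have hK (i : Fin nc) : μ.real (K i) = ∑ l ∈ range (k i + 1),
      (ns.choose l : ℝ) * p i ^ l * (1 - p i) ^ (ns - l) := by
    have hX (j : Fin ns) : μ.real (X j ⁻¹' {i}) = p i :=
      (congrArg ENNReal.toReal (hdist j i)).trans (ENNReal.toReal_ofReal (hp_nonneg i))
    simpa using measureReal_card_hits_le hmeas hindep hX (k i)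
  have hα_compl : α = 1 - ∑ i, μ.real (K i)ᶜ := by
    simp [hα, probReal_compl_eq_one_sub (hK_meas _), hK, sum_sub_distrib]
  have hA : 1 - δ ≤ μ.real A := (ENNReal.ofReal_le_iff_le_toReal (measure_ne_top μ A)).1 hPA
  have hα_le : α ≤ μ.real (⋂ i, K i) :=
    hα_compl ▸ one_sub_sum_measureReal_compl_le_measureReal_iInter hK_meas
  have hinter : μ.real A + μ.real (⋂ i, K i) - 1 ≤ μ.real (A ∩ ⋂ i, K i) :=
    measureReal_add_measureReal_sub_one_le_measureReal_inter (.iInter hK_meas)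
  refine ⟨hα_le.trans measureReal_le_one, ?_⟩
  have hbound : max (α - δ) 0 ≤ μ.real (A ∩ ⋂ i, K i) := max_le (by linarith) measureReal_nonneg
  rw [Set.ofPred_forall]
  exact ENNReal.ofReal_le_of_le_toReal hbound

/-- Theorem 4: concentration bound jointly with the sampling-constraint event. -/
theorem intersection_with_constraint_bound
    {Ω : Type*} [MeasurableSpace Ω] (μ : Measure Ω) [IsProbabilityMeasure μ]
    (ns nc : ℕ) (hns : 0 < ns) (hnc : 0 < nc)
    (X : Fin ns → Ω → Fin nc)
    (hmeas : ∀ j, Measurable (X j))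
    (hindep : iIndepFun X μ)
    (p : Fin nc → ℝ)
    (hp_nonneg : ∀ i, 0 ≤ p i) (hp_sum : ∑ i, p i = 1)
    (hdist : ∀ j i, μ {ω | X j ω = i} = ENNReal.ofReal (p i))
    (k : Fin nc → ℕ)
    (α : ℝ)
    (hα : α = 1 - ((nc : ℝ) - ∑ i, ∑ l ∈ Finset.range (k i + 1),
      (ns.choose l : ℝ) * p i ^ l * (1 - p i) ^ (ns - l)))
    (A : Set Ω) (hA : MeasurableSet A)
    (δ : ℝ) (hδ : δ ∈ Set.Ioo (0 : ℝ) 1)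
    (hPA : ENNReal.ofReal (1 - δ) ≤ μ A) :
    α ≤ 1 ∧
    ENNReal.ofReal (max (α - δ) 0) ≤
      μ (A ∩ {ω | ∀ i, (Finset.univ.filter fun j => X j ω = i).card ≤ k i}) :=
  intersection_with_constraint_bound_general μ ns nc X hmeas hindep p hp_nonneg hdist k α hα A δ hPA
end

section
/- Let X₁, …, X_{n_s} : Ω → {1,…,n_c} be independent random variables on a probability space (Ω, ℙ) with ℙ[X_j = i] = p_i for every j and i, where p ∈ Δ^{n_c}. For i ∈ {1,…,n_c}, let I_i := #{ j ∈ {1,…,n_s} : X_j = i }, fix k ∈ ℕ^{n_c}, let 𝒦 denote the event {∀ i ∈ {1,…,n_c}, I_i ≤ k_i}, and define α := 1 − ( n_c − Σ_{i=1}^{n_c} Σ_{l=0}^{k_i} C(n_s, l)·p_i^l·(1−p_i)^{n_s−l} ). Assume α > 0. Let 𝒜 ⊆ Ω be any measurable event with ℙ[𝒜] ≥ 1 − δ for some δ ∈ (0,1). Then ℙ[𝒦] > 0 and the conditional probability satisfies ℙ[ 𝒜 ∣ 𝒦 ] ≥ Φ(1 − δ/α). -/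
/-!
Each count `#{j | X j = i}` is a sum of independent Bernoulli(`p i`) indicators, so the event
`{#{j | X j = i} ≤ k i}` has the binomial-CDF probability occurring in `α`. A union bound over the
complements of these events gives `ℙ[𝒦] ≥ α > 0`, and then
`ℙ[𝒜 ∩ 𝒦] ≥ ℙ[𝒜] + ℙ[𝒦] - 1 ≥ ℙ[𝒦] - δ ≥ (1 - δ / α) ℙ[𝒦]`.
-/

open MeasureTheory ProbabilityTheory Finset

section Occupancy

variable {Ω ι β : Type*}

lemma measurableSet_setOf_eq_iff [MeasurableSpace β] [MeasurableSingletonClass β] (b : β)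
    (P : Prop) : MeasurableSet {x | x = b ↔ P} :=
  measurableSet_setOfPred.2 <|
    (measurableSet_setOfPred.1 (measurableSet_singleton b)).iff measurable_const

variable [Fintype ι] [DecidableEq β]

lemma setOf_filter_eq_eq_iInter_preimage (X : ι → Ω → β) (b : β) (s : Finset ι) :
    {ω | ({j | X j ω = b} : Finset ι) = s} = ⋂ j, X j ⁻¹' {x | x = b ↔ j ∈ s} := by
  ext ω
  simp [Finset.ext_iff]

variable [MeasurableSpace Ω] [MeasurableSpace β] [MeasurableSingletonClass β]
  {X : ι → Ω → β} {b : β}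

lemma measurableSet_setOf_filter_eq_eq (hX : ∀ j, Measurable (X j)) (s : Finset ι) :
    MeasurableSet {ω | ({j | X j ω = b} : Finset ι) = s} := by
  rw [setOf_filter_eq_eq_iInter_preimage]
  exact .iInter fun j => hX j (measurableSet_setOf_eq_iff b _)

lemma measurable_card_filter_eq (hX : ∀ j, Measurable (X j)) :
    Measurable fun ω => #{j | X j ω = b} := by
  simp_rw [card_filter]
  exact measurable_sum _ fun j _ =>
    Measurable.ite (hX j (measurableSet_singleton b)) measurable_const measurable_const

variable {μ : Measure Ω} [IsProbabilityMeasure μ] {q : ℝ}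

lemma measureReal_setOf_filter_eq_eq (hX : ∀ j, Measurable (X j)) (hind : iIndepFun X μ)
    (hq : ∀ j, μ.real (X j ⁻¹' {b}) = q) (s : Finset ι) :
    μ.real {ω | ({j | X j ω = b} : Finset ι) = s} =
      q ^ #s * (1 - q) ^ (Fintype.card ι - #s) := by
  classical
  have hfactor (j : ι) :
      μ.real (X j ⁻¹' {x | x = b ↔ j ∈ s}) = if j ∈ s then q else 1 - q := by
    by_cases hj : j ∈ s
    · simpa [hj] using hq j
    · have hcompl : X j ⁻¹' {x | x = b ↔ j ∈ s} = (X j ⁻¹' {b})ᶜ := by ext; simp [hj]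
      rw [if_neg hj, hcompl, probReal_compl_eq_one_sub (hX j (measurableSet_singleton b)), hq]
  have hprod := hind.measure_inter_preimage_eq_mul univ
    (sets := fun j => {x | x = b ↔ j ∈ s}) fun j _ => measurableSet_setOf_eq_iff b _
  simp only [mem_univ, Set.iInter_true] at hprod
  rw [setOf_filter_eq_eq_iInter_preimage, measureReal_def, hprod, ENNReal.toReal_prod]
  simp only [← measureReal_def, hfactor, prod_ite, prod_const]
  simp [filter_notMem_eq_sdiff, card_univ_sdiff]

lemma measureReal_card_filter_eq_eq (hX : ∀ j, Measurable (X j)) (hind : iIndepFun X μ)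
    (hq : ∀ j, μ.real (X j ⁻¹' {b}) = q) (l : ℕ) :
    μ.real {ω | #{j | X j ω = b} = l} =
      (Fintype.card ι).choose l * q ^ l * (1 - q) ^ (Fintype.card ι - l) := by
  have hunion : {ω | #{j | X j ω = b} = l} =
      ⋃ s ∈ powersetCard l univ, {ω | ({j | X j ω = b} : Finset ι) = s} := by
    ext ω
    simp
  have hdisj : (powersetCard l (univ : Finset ι) : Set (Finset ι)).PairwiseDisjoint
      fun s => {ω | ({j | X j ω = b} : Finset ι) = s} :=
    fun s _ t _ hst => Set.disjoint_left.2 fun ω hs ht => hst (hs.symm.trans ht)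
  rw [hunion, measureReal_biUnion_finset hdisj fun s _ => measurableSet_setOf_filter_eq_eq hX s,
    sum_congr rfl fun s hs => by
      rw [measureReal_setOf_filter_eq_eq hX hind hq, (mem_powersetCard_univ.1 hs)],
    sum_const, card_powersetCard, card_univ, nsmul_eq_mul, mul_assoc]

lemma measureReal_card_filter_eq_le (hX : ∀ j, Measurable (X j)) (hind : iIndepFun X μ)
    (hq : ∀ j, μ.real (X j ⁻¹' {b}) = q) (k : ℕ) :
    μ.real {ω | #{j | X j ω = b} ≤ k} = ∑ l ∈ range (k + 1),
      (Fintype.card ι).choose l * q ^ l * (1 - q) ^ (Fintype.card ι - l) := by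
  have hunion : {ω | #{j | X j ω = b} ≤ k} = ⋃ l ∈ range (k + 1), {ω | #{j | X j ω = b} = l} := by
    ext ω
    simp
  have hdisj : (range (k + 1) : Set ℕ).PairwiseDisjoint fun l => {ω | #{j | X j ω = b} = l} :=
    fun l _ m _ hlm => Set.disjoint_left.2 fun ω hl hm => hlm (hl.symm.trans hm)
  rw [hunion, measureReal_biUnion_finset hdisj
    fun l _ => measurable_card_filter_eq hX (measurableSet_singleton l)]
  exact sum_congr rfl fun l _ => measureReal_card_filter_eq_eq hX hind hq l

end Occupancy

section UnionBound

variable {Ω ι : Type*} [MeasurableSpace Ω] [Fintype ι] {μ : Measure Ω} [IsProbabilityMeasure μ]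

lemma one_sub_sum_one_sub_le_measureReal_iInter {E : ι → Set Ω} (hE : ∀ i, MeasurableSet (E i)) :
    1 - ∑ i, (1 - μ.real (E i)) ≤ μ.real (⋂ i, E i) := by
  have hcompl : μ.real (⋂ i, E i)ᶜ ≤ ∑ i, (1 - μ.real (E i)) := by
    rw [Set.compl_iInter]
    refine (measureReal_iUnion_fintype_le _).trans (le_of_eq ?_)
    exact sum_congr rfl fun i _ => probReal_compl_eq_one_sub (hE i)
  rw [probReal_compl_eq_one_sub (.iInter hE)] at hcompl
  linarith

end UnionBound

lemma ofReal_one_sub_div_le_measure_inter_div {Ω : Type*} [MeasurableSpace Ω] {μ : Measure Ω}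
    [IsProbabilityMeasure μ] {A K : Set Ω} (hK : MeasurableSet K) {α δ : ℝ} (hα : 0 < α)
    (hαK : α ≤ μ.real K) (hδ : 0 ≤ δ) (hA : ENNReal.ofReal (1 - δ) ≤ μ A) :
    ENNReal.ofReal (max (1 - δ / α) 0) ≤ μ (A ∩ K) / μ K := by
  have hKpos : 0 < μ.real K := hα.trans_le hαK
  have hA' : 1 - δ ≤ μ.real A := (ENNReal.ofReal_le_iff_le_toReal (measure_ne_top μ A)).1 hA
  have hAK : μ.real K - δ ≤ μ.real (A ∩ K) := by
    have := measureReal_union_add_inter (μ := μ) (s := A) hK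
    linarith [measureReal_le_one (μ := μ) (s := A ∪ K)]
  have hratio : 1 - δ / α ≤ μ.real (A ∩ K) / μ.real K := by
    rw [le_div_iff₀ hKpos]
    have : δ ≤ δ / α * μ.real K := by
      rw [div_mul_eq_mul_div, le_div_iff₀ hα]
      exact mul_le_mul_of_nonneg_left hαK hδ
    linarith
  rw [← ofReal_measureReal, ← ofReal_measureReal, ← ENNReal.ofReal_div_of_pos hKpos]
  exact ENNReal.ofReal_le_ofReal (max_le hratio (by positivity))

theorem conditional_on_constraint_bound_general
    {Ω : Type*} [MeasurableSpace Ω] (μ : Measure Ω) [IsProbabilityMeasure μ]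
    (ns nc : ℕ)
    (X : Fin ns → Ω → Fin nc)
    (hmeas : ∀ j, Measurable (X j))
    (hindep : iIndepFun X μ)
    (p : Fin nc → ℝ)
    (hp_nonneg : ∀ i, 0 ≤ p i)
    (hdist : ∀ j i, μ {ω | X j ω = i} = ENNReal.ofReal (p i))
    (k : Fin nc → ℕ)
    (α : ℝ)
    (hα : α = 1 - ((nc : ℝ) - ∑ i, ∑ l ∈ Finset.range (k i + 1),
      (ns.choose l : ℝ) * p i ^ l * (1 - p i) ^ (ns - l)))
    (hαpos : 0 < α)
    (A : Set Ω)
    (δ : ℝ) (hδ : δ ∈ Set.Ioo (0 : ℝ) 1)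
    (hPA : ENNReal.ofReal (1 - δ) ≤ μ A) :
    0 < μ {ω | ∀ i, (Finset.univ.filter fun j => X j ω = i).card ≤ k i} ∧
    ENNReal.ofReal (max (1 - δ / α) 0) ≤
      μ (A ∩ {ω | ∀ i, (Finset.univ.filter fun j => X j ω = i).card ≤ k i}) /
        μ {ω | ∀ i, (Finset.univ.filter fun j => X j ω = i).card ≤ k i} := by
  have hmeasK (i : Fin nc) : MeasurableSet {ω | #{j | X j ω = i} ≤ k i} :=
    measurable_card_filter_eq hmeas measurableSet_Iic
  have hcdf (i : Fin nc) : μ.real {ω | #{j | X j ω = i} ≤ k i} = ∑ l ∈ range (k i + 1),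
      (ns.choose l : ℝ) * p i ^ l * (1 - p i) ^ (ns - l) := by
    have hq (j : Fin ns) : μ.real (X j ⁻¹' {i}) = p i :=
      (congrArg ENNReal.toReal (hdist j i)).trans (ENNReal.toReal_ofReal (hp_nonneg i))
    simpa using measureReal_card_filter_eq_le hmeas hindep hq (k i)
  have hαK : α ≤ μ.real (⋂ i, {ω | #{j | X j ω = i} ≤ k i}) := by
    refine le_trans (le_of_eq ?_) (one_sub_sum_one_sub_le_measureReal_iInter hmeasK)
    rw [hα, sum_sub_distrib]
    simp [hcdf]
  rw [Set.ofPred_forall]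
  exact ⟨(ENNReal.toReal_pos_iff.1 (hαpos.trans_le hαK)).1,
    ofReal_one_sub_div_le_measure_inter_div (.iInter hmeasK) hαpos hαK hδ.1.le hPA⟩

/-- Theorem 5: conditional concentration bound given the sampling-constraint event. -/
theorem conditional_on_constraint_bound
    {Ω : Type*} [MeasurableSpace Ω] (μ : Measure Ω) [IsProbabilityMeasure μ]
    (ns nc : ℕ) (hns : 0 < ns) (hnc : 0 < nc)
    (X : Fin ns → Ω → Fin nc)
    (hmeas : ∀ j, Measurable (X j))
    (hindep : iIndepFun X μ)
    (p : Fin nc → ℝ)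
    (hp_nonneg : ∀ i, 0 ≤ p i) (hp_sum : ∑ i, p i = 1)
    (hdist : ∀ j i, μ {ω | X j ω = i} = ENNReal.ofReal (p i))
    (k : Fin nc → ℕ)
    (α : ℝ)
    (hα : α = 1 - ((nc : ℝ) - ∑ i, ∑ l ∈ Finset.range (k i + 1),
      (ns.choose l : ℝ) * p i ^ l * (1 - p i) ^ (ns - l)))
    (hαpos : 0 < α)
    (A : Set Ω) (hA : MeasurableSet A)
    (δ : ℝ) (hδ : δ ∈ Set.Ioo (0 : ℝ) 1)
    (hPA : ENNReal.ofReal (1 - δ) ≤ μ A) :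
    0 < μ {ω | ∀ i, (Finset.univ.filter fun j => X j ω = i).card ≤ k i} ∧
    ENNReal.ofReal (max (1 - δ / α) 0) ≤
      μ (A ∩ {ω | ∀ i, (Finset.univ.filter fun j => X j ω = i).card ≤ k i}) /
        μ {ω | ∀ i, (Finset.univ.filter fun j => X j ω = i).card ≤ k i} :=
  conditional_on_constraint_bound_general μ ns nc X hmeas hindep p hp_nonneg hdist k α hα hαpos A δ
    hδ hPA
end

section
/- Fix A ∈ ℝ^{m×m} and a positive definite Q ∈ ℝ^{m×m}. For i = 1, 2, let Σ_i ∈ ℝ^{m×m} be symmetric, C_i ∈ ℝ^{n_i×m}, and R_i ∈ ℝ^{n_i×n_i} positive definite. Assume Σ₁ is positive definite, Σ₁ ⪯ Σ₂, and C₂ᵀR₂⁻¹C₂ ⪯ C₁ᵀR₁⁻¹C₁. Define P_i := (Σ_i⁻¹ + C_iᵀR_i⁻¹C_i)⁻¹ and Σ_i' := A P_i Aᵀ + Q. Then P₁ and Σ₁' are positive definite, P₁ ⪯ P₂, and Σ₁' ⪯ Σ₂'. -/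
/-!
Matrix inversion is antitone on positive definite matrices, so the measurement update
`Σ ↦ (Σ⁻¹ + Cᵀ R⁻¹ C)⁻¹` is monotone in `Σ` and antitone in the information `Cᵀ R⁻¹ C`;
the prediction step `P ↦ A P Aᵀ + Q` is a congruence plus a constant and so preserves the order.
-/

namespace Matrix

section Field

variable {n 𝕜 : Type*} [Fintype n] [DecidableEq n] [Field 𝕜] [PartialOrder 𝕜] [StarRing 𝕜]
  [StarOrderedRing 𝕜]

/-- Both `fromBlocks N 1 1 M⁻¹` Schur complements are the differences in question:
`N - M` with respect to `M⁻¹`, and `M⁻¹ - N⁻¹` with respect to `N`. -/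
theorem PosDef.posSemidef_inv_sub_inv {M N : Matrix n n 𝕜} (hM : M.PosDef) (hN : N.PosDef)
    (h : (N - M).PosSemidef) : (M⁻¹ - N⁻¹).PosSemidef := by
  have := hM.isUnit.invertible
  have := hN.isUnit.invertible
  have hblock : (fromBlocks N 1 1 M⁻¹).PosSemidef := by
    simpa using (PosDef.fromBlocks₂₂ N 1 hM.inv).2 (by simpa using h)
  simpa using (PosDef.fromBlocks₁₁ 1 M⁻¹ hN).1 (by simpa using hblock)

theorem PosDef.posSemidef_inv_add_sub_inv_add {S₁ S₂ J₁ J₂ : Matrix n n 𝕜} (hS₁ : S₁.PosDef)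
    (hS : (S₂ - S₁).PosSemidef) (hJ₂ : J₂.PosSemidef) (hJ : (J₁ - J₂).PosSemidef) :
    ((S₂⁻¹ + J₂)⁻¹ - (S₁⁻¹ + J₁)⁻¹).PosSemidef := by
  have hS₂ : S₂.PosDef := by simpa using hS₁.add_posSemidef hS
  have hJ₁ : J₁.PosSemidef := by simpa using hJ₂.add hJ
  refine (hS₂.inv.add_posSemidef hJ₂).posSemidef_inv_sub_inv (hS₁.inv.add_posSemidef hJ₁) ?_
  simpa [add_sub_add_comm] using (hS₁.posSemidef_inv_sub_inv hS₂ hS).add hJ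

end Field

section TrivialStar

variable {m n R : Type*} [Fintype m] [Fintype n] [CommRing R] [PartialOrder R] [StarRing R]
  [TrivialStar R]

theorem PosSemidef.transpose_mul_mul_same {M : Matrix n n R} (hM : M.PosSemidef)
    (B : Matrix n m R) : (Bᵀ * M * B).PosSemidef := by
  simpa [conjTranspose_eq_transpose_of_trivial] using hM.conjTranspose_mul_mul_same B

theorem PosSemidef.mul_mul_transpose_same {M : Matrix n n R} (hM : M.PosSemidef)
    (B : Matrix m n R) : (B * M * Bᵀ).PosSemidef := by
  simpa [conjTranspose_eq_transpose_of_trivial] using hM.mul_mul_conjTranspose_same B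

end TrivialStar

end Matrix

open Matrix

theorem one_step_covariance_comparison_general
    {m n1 n2 : ℕ}
    (A Q : Matrix (Fin m) (Fin m) ℝ) (hQ : Q.PosDef)
    (S1 S2 : Matrix (Fin m) (Fin m) ℝ)
    (C1 : Matrix (Fin n1) (Fin m) ℝ) (C2 : Matrix (Fin n2) (Fin m) ℝ)
    (R1 : Matrix (Fin n1) (Fin n1) ℝ) (R2 : Matrix (Fin n2) (Fin n2) ℝ)
    (hR1 : R1.PosDef) (hR2 : R2.PosDef)
    (hS1pd : S1.PosDef)
    (hS12 : (S2 - S1).PosSemidef)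
    (hC : (C1ᵀ * R1⁻¹ * C1 - C2ᵀ * R2⁻¹ * C2).PosSemidef)
    (P1 P2 S1' S2' : Matrix (Fin m) (Fin m) ℝ)
    (hP1 : P1 = (S1⁻¹ + C1ᵀ * R1⁻¹ * C1)⁻¹)
    (hP2 : P2 = (S2⁻¹ + C2ᵀ * R2⁻¹ * C2)⁻¹)
    (hS1' : S1' = A * P1 * Aᵀ + Q)
    (hS2' : S2' = A * P2 * Aᵀ + Q) :
    P1.PosDef ∧ S1'.PosDef ∧ (P2 - P1).PosSemidef ∧ (S2' - S1').PosSemidef := by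
  have hJ1 : (C1ᵀ * R1⁻¹ * C1).PosSemidef := hR1.inv.posSemidef.transpose_mul_mul_same C1
  have hJ2 : (C2ᵀ * R2⁻¹ * C2).PosSemidef := hR2.inv.posSemidef.transpose_mul_mul_same C2
  have hP1pd : P1.PosDef := hP1 ▸ (hS1pd.inv.add_posSemidef hJ1).inv
  have hP : (P2 - P1).PosSemidef := hP1 ▸ hP2 ▸ hS1pd.posSemidef_inv_add_sub_inv_add hS12 hJ2 hC
  have hS1'pd : S1'.PosDef :=
    hS1' ▸ PosDef.posSemidef_add (hP1pd.posSemidef.mul_mul_transpose_same A) hQ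
  refine ⟨hP1pd, hS1'pd, hP, ?_⟩
  have hS' : S2' - S1' = A * (P2 - P1) * Aᵀ := by
    rw [hS1', hS2', mul_sub, sub_mul, add_sub_add_right_eq_sub]
  exact hS' ▸ hP.mul_mul_transpose_same A

/-- Corollary 4: one-step monotonicity of the Kalman filter covariance updates. -/
theorem one_step_covariance_comparison
    {m n1 n2 : ℕ}
    (A Q : Matrix (Fin m) (Fin m) ℝ) (hQ : Q.PosDef)
    (S1 S2 : Matrix (Fin m) (Fin m) ℝ)
    (hS1sym : S1.IsSymm) (hS2sym : S2.IsSymm)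
    (C1 : Matrix (Fin n1) (Fin m) ℝ) (C2 : Matrix (Fin n2) (Fin m) ℝ)
    (R1 : Matrix (Fin n1) (Fin n1) ℝ) (R2 : Matrix (Fin n2) (Fin n2) ℝ)
    (hR1 : R1.PosDef) (hR2 : R2.PosDef)
    (hS1pd : S1.PosDef)
    (hS12 : (S2 - S1).PosSemidef)
    (hC : (C1ᵀ * R1⁻¹ * C1 - C2ᵀ * R2⁻¹ * C2).PosSemidef)
    (P1 P2 S1' S2' : Matrix (Fin m) (Fin m) ℝ)
    (hP1 : P1 = (S1⁻¹ + C1ᵀ * R1⁻¹ * C1)⁻¹)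
    (hP2 : P2 = (S2⁻¹ + C2ᵀ * R2⁻¹ * C2)⁻¹)
    (hS1' : S1' = A * P1 * Aᵀ + Q)
    (hS2' : S2' = A * P2 * Aᵀ + Q) :
    P1.PosDef ∧ S1'.PosDef ∧ (P2 - P1).PosSemidef ∧ (S2' - S1').PosSemidef :=
  one_step_covariance_comparison_general A Q hQ S1 S2 C1 C2 R1 R2 hR1 hR2 hS1pd hS12 hC P1 P2 S1'
    S2' hP1 hP2 hS1' hS2'
end

section
/- Fix A ∈ ℝ^{m×m} and a positive definite Q ∈ ℝ^{m×m}. For i = 1, 2, let C_i ∈ ℝ^{n_i×m}, R_i ∈ ℝ^{n_i×n_i} positive definite, and let initial symmetric matrices Σ_{1,(0)}, Σ_{2,(0)} be given with Σ_{1,(0)} positive definite and Σ_{1,(0)} ⪯ Σ_{2,(0)}. Define recursively P_{i,(t)} := (Σ_{i,(t)}⁻¹ + C_iᵀR_i⁻¹C_i)⁻¹ and Σ_{i,(t+1)} := A P_{i,(t)} Aᵀ + Q for all t ≥ 0. If C₂ᵀR₂⁻¹C₂ ⪯ C₁ᵀR₁⁻¹C₁, then for every t ≥ 0 the matrices P_{1,(t)}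 and Σ_{1,(t+1)} are positive definite, P_{1,(t)} ⪯ P_{2,(t)}, and Σ_{1,(t+1)} ⪯ Σ_{2,(t+1)}. -/
/-!
In the Loewner order, inversion is antitone on positive definite matrices, so the measurement
update `S ↦ (S⁻¹ + W)⁻¹` is monotone in `S` and antitone in `W`, while the time update
`P ↦ A P Aᵀ + Q` is monotone and lands in the positive definite cone because `Q` does.
Induction on `t` carries `Σ₁ ≻ 0` and `Σ₁ ⪯ Σ₂` through both updates.
-/

open Matrix
open scoped MatrixOrder ComplexOrder

namespace Matrix

variable {𝕜 n : Type*} [RCLike 𝕜]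

theorem PosDef.of_le {M N : Matrix n n 𝕜} (hM : M.PosDef) (hMN : M ≤ N) : N.PosDef := by
  simpa using hM.add_posSemidef hMN

variable [Fintype n] [DecidableEq n]

theorem PosDef.inv_anti {M N : Matrix n n 𝕜} (hM : M.PosDef) (hMN : M ≤ N) : N⁻¹ ≤ M⁻¹ := by
  have hN : N.PosDef := hM.of_le hMN
  -- with `D = N - M`: `M⁻¹ - N⁻¹ = N⁻¹ D M⁻¹ (M + D) N⁻¹`, a sum of two p.s.d. congruences
  have key : M⁻¹ - N⁻¹ =
      star N⁻¹ * (N - M) * N⁻¹ + (N⁻¹ * (N - M)) * M⁻¹ * star (N⁻¹ * (N - M)) := by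
    rw [star_mul, hMN.isHermitian.star_eq, hN.inv.isHermitian.star_eq]
    obtain ⟨u, rfl⟩ := hM.isUnit
    obtain ⟨v, rfl⟩ := hN.isUnit
    simp only [← coe_units_inv, mul_sub, sub_mul, mul_assoc, Units.inv_mul_cancel_left,
      Units.inv_mul, Units.mul_inv, mul_one, one_mul]
    abel
  rw [← sub_nonneg, key]
  exact add_nonneg (star_left_conjugate_nonneg hMN.nonneg N⁻¹)
    (star_right_conjugate_nonneg hM.inv.posSemidef.nonneg _)

theorem PosDef.inv_inv_add {S W : Matrix n n 𝕜} (hS : S.PosDef) (hW : W.PosSemidef) :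
    (S⁻¹ + W)⁻¹.PosDef :=
  (hS.inv.add_posSemidef hW).inv

theorem PosDef.inv_inv_add_le_inv_inv_add {S₁ S₂ W₁ W₂ : Matrix n n 𝕜} (hS₁ : S₁.PosDef)
    (hS : S₁ ≤ S₂) (hW₂ : W₂.PosSemidef) (hW : W₂ ≤ W₁) : (S₁⁻¹ + W₁)⁻¹ ≤ (S₂⁻¹ + W₂)⁻¹ :=
  ((hS₁.of_le hS).inv.add_posSemidef hW₂).inv_anti (add_le_add (hS₁.inv_anti hS) hW)

end Matrix

theorem iterated_covariance_comparison_general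
    {m n1 n2 : ℕ}
    (A Q : Matrix (Fin m) (Fin m) ℝ) (hQ : Q.PosDef)
    (C1 : Matrix (Fin n1) (Fin m) ℝ) (C2 : Matrix (Fin n2) (Fin m) ℝ)
    (R1 : Matrix (Fin n1) (Fin n1) ℝ) (R2 : Matrix (Fin n2) (Fin n2) ℝ)
    (hR2 : R2.PosDef)
    (S1 S2 : ℕ → Matrix (Fin m) (Fin m) ℝ)
    (P1 P2 : ℕ → Matrix (Fin m) (Fin m) ℝ)
    (hS10pd : (S1 0).PosDef)
    (hS0 : ((S2 0) - (S1 0)).PosSemidef)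
    (hP1 : ∀ t, P1 t = ((S1 t)⁻¹ + C1ᵀ * R1⁻¹ * C1)⁻¹)
    (hP2 : ∀ t, P2 t = ((S2 t)⁻¹ + C2ᵀ * R2⁻¹ * C2)⁻¹)
    (hS1rec : ∀ t, S1 (t + 1) = A * P1 t * Aᵀ + Q)
    (hS2rec : ∀ t, S2 (t + 1) = A * P2 t * Aᵀ + Q)
    (hC : (C1ᵀ * R1⁻¹ * C1 - C2ᵀ * R2⁻¹ * C2).PosSemidef) :
    ∀ t, (P1 t).PosDef ∧ (S1 (t + 1)).PosDef ∧
      (P2 t - P1 t).PosSemidef ∧ (S2 (t + 1) - S1 (t + 1)).PosSemidef := by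
  have hW₂ : (C2ᵀ * R2⁻¹ * C2).PosSemidef := by
    simpa using hR2.inv.posSemidef.conjTranspose_mul_mul_same C2
  have hW₁ : (C1ᵀ * R1⁻¹ * C1).PosSemidef := nonneg_iff_posSemidef.mp (hW₂.nonneg.trans hC)
  have hAstar : star A = Aᵀ := by
    rw [star_eq_conjTranspose, conjTranspose_eq_transpose_of_trivial]
  have step : ∀ t, (S1 t).PosDef → S1 t ≤ S2 t →
      (P1 t).PosDef ∧ (S1 (t + 1)).PosDef ∧ P1 t ≤ P2 t ∧ S1 (t + 1) ≤ S2 (t + 1) := by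
    intro t hS₁ hS
    have hP₁ : (P1 t).PosDef := hP1 t ▸ hS₁.inv_inv_add hW₁
    have hP : P1 t ≤ P2 t := hP1 t ▸ hP2 t ▸ hS₁.inv_inv_add_le_inv_inv_add hS hW₂ hC
    refine ⟨hP₁, ?_, hP, ?_⟩
    · rw [hS1rec, ← hAstar]
      exact PosDef.posSemidef_add (hP₁.posSemidef.mul_mul_conjTranspose_same A) hQ
    · rw [hS1rec, hS2rec, ← hAstar]
      exact add_le_add (star_right_conjugate_le_conjugate hP A) le_rfl
  have invariant : ∀ t, (S1 t).PosDef ∧ S1 t ≤ S2 t := by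
    intro t
    induction t with
    | zero => exact ⟨hS10pd, hS0⟩
    | succ t ih =>
      obtain ⟨-, hS₁, -, hS⟩ := step t ih.1 ih.2
      exact ⟨hS₁, hS⟩
  exact fun t => step t (invariant t).1 (invariant t).2

/-- Corollary 4 (iterated form): monotonicity of the Kalman filter covariance
recursion for all time instants. -/
theorem iterated_covariance_comparison
    {m n1 n2 : ℕ}
    (A Q : Matrix (Fin m) (Fin m) ℝ) (hQ : Q.PosDef)
    (C1 : Matrix (Fin n1) (Fin m) ℝ) (C2 : Matrix (Fin n2) (Fin m) ℝ)
    (R1 : Matrix (Fin n1) (Fin n1) ℝ) (R2 : Matrix (Fin n2) (Fin n2) ℝ)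
    (hR1 : R1.PosDef) (hR2 : R2.PosDef)
    (S1 S2 : ℕ → Matrix (Fin m) (Fin m) ℝ)
    (P1 P2 : ℕ → Matrix (Fin m) (Fin m) ℝ)
    (hS10sym : (S1 0).IsSymm) (hS20sym : (S2 0).IsSymm)
    (hS10pd : (S1 0).PosDef)
    (hS0 : ((S2 0) - (S1 0)).PosSemidef)
    (hP1 : ∀ t, P1 t = ((S1 t)⁻¹ + C1ᵀ * R1⁻¹ * C1)⁻¹)
    (hP2 : ∀ t, P2 t = ((S2 t)⁻¹ + C2ᵀ * R2⁻¹ * C2)⁻¹)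
    (hS1rec : ∀ t, S1 (t + 1) = A * P1 t * Aᵀ + Q)
    (hS2rec : ∀ t, S2 (t + 1) = A * P2 t * Aᵀ + Q)
    (hC : (C1ᵀ * R1⁻¹ * C1 - C2ᵀ * R2⁻¹ * C2).PosSemidef) :
    ∀ t, (P1 t).PosDef ∧ (S1 (t + 1)).PosDef ∧
      (P2 t - P1 t).PosSemidef ∧ (S2 (t + 1) - S1 (t + 1)).PosSemidef :=
  iterated_covariance_comparison_general A Q hQ C1 C2 R1 R2 hR2 S1 S2 P1 P2 hS10pd hS0 hP1 hP2
    hS1rec hS2rec hC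
end

section
/- Fix A ∈ ℝ^{m×m} and a positive definite Q ∈ ℝ^{m×m}. For i = 1, 2, let C_i ∈ ℝ^{n_i×m} and R_i ∈ ℝ^{n_i×n_i} be positive definite, and suppose P₁, P₂ ∈ ℝ^{m×m} are positive definite matrices such that for every positive definite initial matrix X₀, the sequence defined by X_{t+1} = f₂(X_t, C_iᵀR_i⁻¹C_i) converges to P_i (for i = 1, 2 respectively). If C₂ᵀR₂⁻¹C₂ ⪯ C₁ᵀR₁⁻¹C₁, then P₁ ⪯ P₂. -/
open Matrix Filter

/-- The Riccati-type map `f₂(Λ, Θ) = ((A Λ Aᵀ + Q)⁻¹ + Θ)⁻¹`. -/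
noncomputable def f2 {m : ℕ} (A Q Λ Θ : Matrix (Fin m) (Fin m) ℝ) :
    Matrix (Fin m) (Fin m) ℝ :=
  ((A * Λ * Aᵀ + Q)⁻¹ + Θ)⁻¹

/-!
Matrix inversion is antitone in the Loewner order. Hence `X ↦ f₂(X, Θ)` is monotone in `X` on
positive semidefinite matrices and antitone in `Θ`, so with `Θᵢ = Cᵢᵀ Rᵢ⁻¹ Cᵢ` the iterates
started at `Q` satisfy `f₂(·, Θ₁)^[t] Q ⪯ f₂(·, Θ₂)^[t] Q` for all `t`. The positive
semidefinite cone is closed, so the order passes to the limits `P₁ ⪯ P₂`.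
-/

open Set

open scoped MatrixOrder ComplexOrder

theorem MonotoneOn.le_iterate_of_le {α : Type*} [Preorder α] {s : Set α} {f g : α → α}
    (hg : MonotoneOn g s) (hf : MapsTo f s s) (hgs : MapsTo g s s)
    (h : ∀ x ∈ s, f x ≤ g x) {x : α} (hx : x ∈ s) (n : ℕ) : f^[n] x ≤ g^[n] x := by
  induction n with
  | zero => rfl
  | succ n ih =>
    rw [Function.iterate_succ_apply', Function.iterate_succ_apply']
    have hfn : f^[n] x ∈ s := hf.iterate n hx
    exact (h _ hfn).trans (hg hfn (hgs.iterate n hx) ih)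

namespace Matrix

variable {𝕜 n : Type*} [RCLike 𝕜] [Fintype n]

theorem isClosed_setOf_posSemidef : IsClosed {M : Matrix n n 𝕜 | M.PosSemidef} := by
  simp only [posSemidef_iff_dotProduct_mulVec, ofPred_and, ofPred_forall]
  exact (isClosed_eq (continuous_id.matrix_conjTranspose) continuous_id).inter
    (isClosed_iInter fun x => isClosed_le continuous_const (by fun_prop))

variable [DecidableEq n]

/-- The block matrix `[[N, 1], [1, M⁻¹]]` has Schur complements `N - M` and `M⁻¹ - N⁻¹`. -/
theorem PosDef.inv_le_inv {M N : Matrix n n 𝕜} (hM : M.PosDef) (h : M ≤ N) : N⁻¹ ≤ M⁻¹ := by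
  have hN : N.PosDef := by simpa using hM.add_posSemidef h
  have := hM.isUnit.invertible
  have := hN.isUnit.invertible
  have := hM.inv.isUnit.invertible
  have hblock : (fromBlocks N 1 1ᴴ M⁻¹).PosSemidef :=
    (PosDef.fromBlocks₂₂ N 1 hM.inv).2 (by simpa using le_iff.mp h)
  rw [le_iff]
  simpa using (PosDef.fromBlocks₁₁ 1 M⁻¹ hN).1 (by simpa using hblock)

end Matrix

theorem Matrix.posDef_mul_mul_transpose_add {ι : Type*} [Fintype ι] {A Q X : Matrix ι ι ℝ}
    (hQ : Q.PosDef) (hX : 0 ≤ X) : (A * X * Aᵀ + Q).PosDef := by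
  simpa using PosDef.posSemidef_add (hX.posSemidef.mul_mul_conjTranspose_same A) hQ

section Riccati

variable {m : ℕ} {A Q : Matrix (Fin m) (Fin m) ℝ}

theorem f2_posDef (hQ : Q.PosDef) {X Θ : Matrix (Fin m) (Fin m) ℝ} (hX : 0 ≤ X) (hΘ : 0 ≤ Θ) :
    (f2 A Q X Θ).PosDef :=
  ((posDef_mul_mul_transpose_add hQ hX).inv.add_posSemidef hΘ.posSemidef).inv

theorem f2_mono_left (hQ : Q.PosDef) {X Y Θ : Matrix (Fin m) (Fin m) ℝ} (hX : 0 ≤ X)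
    (hΘ : 0 ≤ Θ) (hXY : X ≤ Y) : f2 A Q X Θ ≤ f2 A Q Y Θ := by
  have hAXA : A * X * Aᵀ ≤ A * Y * Aᵀ := by
    simpa only [star_eq_conjTranspose, conjTranspose_eq_transpose_of_trivial] using
      star_right_conjugate_le_conjugate hXY A
  have hY : 0 ≤ Y := hX.trans hXY
  refine PosDef.inv_le_inv ((posDef_mul_mul_transpose_add hQ hY).inv.add_posSemidef
    hΘ.posSemidef) ?_
  gcongr
  exact PosDef.inv_le_inv (posDef_mul_mul_transpose_add hQ hX) (by gcongr)

theorem f2_anti_right (hQ : Q.PosDef) {X Θ Θ' : Matrix (Fin m) (Fin m) ℝ} (hX : 0 ≤ X)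
    (hΘ : 0 ≤ Θ) (hΘΘ' : Θ ≤ Θ') : f2 A Q X Θ' ≤ f2 A Q X Θ :=
  PosDef.inv_le_inv ((posDef_mul_mul_transpose_add hQ hX).inv.add_posSemidef hΘ.posSemidef)
    (by gcongr)

end Riccati

theorem steady_state_covariance_comparison_general
    {m n1 n2 : ℕ}
    (A Q : Matrix (Fin m) (Fin m) ℝ) (hQ : Q.PosDef)
    (C1 : Matrix (Fin n1) (Fin m) ℝ) (C2 : Matrix (Fin n2) (Fin m) ℝ)
    (R1 : Matrix (Fin n1) (Fin n1) ℝ) (R2 : Matrix (Fin n2) (Fin n2) ℝ)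
    (hR2 : R2.PosDef)
    (P1 P2 : Matrix (Fin m) (Fin m) ℝ)
    (hP1conv : ∀ X0 : Matrix (Fin m) (Fin m) ℝ, X0.PosDef →
      Tendsto (fun t => (fun X => f2 A Q X (C1ᵀ * R1⁻¹ * C1))^[t] X0) atTop (nhds P1))
    (hP2conv : ∀ X0 : Matrix (Fin m) (Fin m) ℝ, X0.PosDef →
      Tendsto (fun t => (fun X => f2 A Q X (C2ᵀ * R2⁻¹ * C2))^[t] X0) atTop (nhds P2))
    (hC : (C1ᵀ * R1⁻¹ * C1 - C2ᵀ * R2⁻¹ * C2).PosSemidef) :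
    (P2 - P1).PosSemidef := by
  set Θ1 := C1ᵀ * R1⁻¹ * C1
  set Θ2 := C2ᵀ * R2⁻¹ * C2
  have hΘ12 : Θ2 ≤ Θ1 := hC
  have hΘ2 : 0 ≤ Θ2 := by
    simpa using (hR2.inv.posSemidef.conjTranspose_mul_mul_same C2).nonneg
  have hΘ1 : 0 ≤ Θ1 := hΘ2.trans hΘ12
  have hmaps : ∀ {Θ}, 0 ≤ Θ → MapsTo (fun X => f2 A Q X Θ) (Ici 0) (Ici 0) :=
    fun hΘ _ hX => (f2_posDef hQ hX hΘ).posSemidef.nonneg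
  have hiter (t : ℕ) : (fun X => f2 A Q X Θ1)^[t] Q ≤ (fun X => f2 A Q X Θ2)^[t] Q :=
    MonotoneOn.le_iterate_of_le (fun X hX _ _ hXY => f2_mono_left hQ hX hΘ2 hXY) (hmaps hΘ1)
      (hmaps hΘ2) (fun X hX => f2_anti_right hQ hX hΘ2 hΘ12) hQ.posSemidef.nonneg t
  exact isClosed_setOf_posSemidef.mem_of_tendsto ((hP2conv Q hQ).sub (hP1conv Q hQ))
    (Eventually.of_forall fun t => le_iff.mp (hiter t))

/-- Corollary 6: comparison of steady-state error covariances. -/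
theorem steady_state_covariance_comparison
    {m n1 n2 : ℕ}
    (A Q : Matrix (Fin m) (Fin m) ℝ) (hQ : Q.PosDef)
    (C1 : Matrix (Fin n1) (Fin m) ℝ) (C2 : Matrix (Fin n2) (Fin m) ℝ)
    (R1 : Matrix (Fin n1) (Fin n1) ℝ) (R2 : Matrix (Fin n2) (Fin n2) ℝ)
    (hR1 : R1.PosDef) (hR2 : R2.PosDef)
    (P1 P2 : Matrix (Fin m) (Fin m) ℝ)
    (hP1pd : P1.PosDef) (hP2pd : P2.PosDef)
    (hP1conv : ∀ X0 : Matrix (Fin m) (Fin m) ℝ, X0.PosDef →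
      Tendsto (fun t => (fun X => f2 A Q X (C1ᵀ * R1⁻¹ * C1))^[t] X0) atTop (nhds P1))
    (hP2conv : ∀ X0 : Matrix (Fin m) (Fin m) ℝ, X0.PosDef →
      Tendsto (fun t => (fun X => f2 A Q X (C2ᵀ * R2⁻¹ * C2))^[t] X0) atTop (nhds P2))
    (hC : (C1ᵀ * R1⁻¹ * C1 - C2ᵀ * R2⁻¹ * C2).PosSemidef) :
    (P2 - P1).PosSemidef :=
  steady_state_covariance_comparison_general A Q hQ C1 C2 R1 R2 hR2 P1 P2 hP1conv hP2conv hC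
end

section
/- Fix A ∈ ℝ^{m×m}, a positive definite Q ∈ ℝ^{m×m}, and a positive semidefinite Π ∈ ℝ^{m×m}. Suppose U ∈ ℝ^{m×m} is positive definite and satisfies the steady-state equation U = ((A U Aᵀ + Q)⁻¹ + Π)⁻¹. Set X := U⁻¹. Then the 2m × 2m block matrix [[ −X + Q⁻¹ + Π , Q⁻¹A ], [ (Q⁻¹A)ᵀ , X + AᵀQ⁻¹A ]] is positive semidefinite. -/
/-!
With `S := A U Aᵀ + Q`, the Woodbury identity gives
`S⁻¹ = Q⁻¹ - Q⁻¹ A (U⁻¹ + Aᵀ Q⁻¹ A)⁻¹ Aᵀ Q⁻¹`, so the Schur complement of the positive definite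
lower-right block `U⁻¹ + Aᵀ Q⁻¹ A` in the block matrix is `S⁻¹ + Π - U⁻¹`. The steady-state
equation says exactly that this complement vanishes.
-/

open Matrix
open scoped ComplexOrder

namespace Matrix

variable {n : Type*} [Fintype n] [DecidableEq n]

theorem inv_eq_of_eq_nonsing_inv {α : Type*} [CommRing α] {U M : Matrix n n α}
    (hU : IsUnit U) (h : U = M⁻¹) : U⁻¹ = M := by
  rw [h] at hU ⊢
  exact nonsing_inv_nonsing_inv M ((isUnit_iff_isUnit_det M).mp (isUnit_nonsing_inv_iff.mp hU))

variable {𝕜 : Type*} [RCLike 𝕜] {Q U : Matrix n n 𝕜}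

theorem PosDef.inv_add_conjTranspose_mul_inv_mul (hQ : Q.PosDef) (hU : U.PosDef)
    (A : Matrix n n 𝕜) : (U⁻¹ + Aᴴ * Q⁻¹ * A).PosDef :=
  hU.inv.add_posSemidef (hQ.inv.posSemidef.conjTranspose_mul_mul_same A)

theorem PosDef.inv_mul_mul_conjTranspose_add (hQ : Q.PosDef) (hU : U.PosDef)
    (A : Matrix n n 𝕜) :
    (A * U * Aᴴ + Q)⁻¹ = Q⁻¹ - Q⁻¹ * A * (U⁻¹ + Aᴴ * Q⁻¹ * A)⁻¹ * Aᴴ * Q⁻¹ := by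
  rw [add_comm]
  exact add_mul_mul_inv_eq_sub Q A U Aᴴ hQ.isUnit hU.isUnit
    (hQ.inv_add_conjTranspose_mul_inv_mul hU A).isUnit

theorem PosDef.posSemidef_fromBlocks_iff (hQ : Q.PosDef) (hU : U.PosDef) (A : Matrix n n 𝕜)
    (P : Matrix n n 𝕜) :
    (fromBlocks (-U⁻¹ + Q⁻¹ + P) (Q⁻¹ * A) (Q⁻¹ * A)ᴴ (U⁻¹ + Aᴴ * Q⁻¹ * A)).PosSemidef ↔
      ((A * U * Aᴴ + Q)⁻¹ + P - U⁻¹).PosSemidef := by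
  have hD := hQ.inv_add_conjTranspose_mul_inv_mul hU A
  have := hD.isUnit.invertible
  rw [PosDef.fromBlocks₂₂ _ _ hD, conjTranspose_mul, hQ.inv.isHermitian.eq,
    hQ.inv_mul_mul_conjTranspose_add hU A]
  simp only [Matrix.mul_assoc]
  abel_nf

end Matrix

theorem steady_state_block_matrix_psd_general
    {m : ℕ}
    (A Q Pi : Matrix (Fin m) (Fin m) ℝ)
    (hQ : Q.PosDef)
    (U : Matrix (Fin m) (Fin m) ℝ) (hU : U.PosDef)
    (hfix : U = ((A * U * Aᵀ + Q)⁻¹ + Pi)⁻¹)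
    (X : Matrix (Fin m) (Fin m) ℝ) (hX : X = U⁻¹) :
    (Matrix.fromBlocks (-X + Q⁻¹ + Pi) (Q⁻¹ * A) (Q⁻¹ * A)ᵀ (X + Aᵀ * Q⁻¹ * A)).PosSemidef := by
  have hUinv : U⁻¹ = (A * U * Aᵀ + Q)⁻¹ + Pi := inv_eq_of_eq_nonsing_inv hU.isUnit hfix
  subst hX
  simp only [← conjTranspose_eq_transpose_of_trivial] at hUinv ⊢
  rw [hQ.posSemidef_fromBlocks_iff hU, ← hUinv, sub_self]
  exact .zero

/-- Every feasible point of the steady-state program yields, via `X := U⁻¹`,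
a feasible point of its convex relaxation: the associated block matrix is p.s.d. -/
theorem steady_state_block_matrix_psd
    {m : ℕ}
    (A Q Pi : Matrix (Fin m) (Fin m) ℝ)
    (hQ : Q.PosDef) (hPi : Pi.PosSemidef)
    (U : Matrix (Fin m) (Fin m) ℝ) (hU : U.PosDef)
    (hfix : U = ((A * U * Aᵀ + Q)⁻¹ + Pi)⁻¹)
    (X : Matrix (Fin m) (Fin m) ℝ) (hX : X = U⁻¹) :
    (Matrix.fromBlocks (-X + Q⁻¹ + Pi) (Q⁻¹ * A) (Q⁻¹ * A)ᵀ (X + Aᵀ * Q⁻¹ * A)).PosSemidef :=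
  steady_state_block_matrix_psd_general A Q Pi hQ U hU hfix X hX
end
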